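/- arXiv:2202.07996 — 3 statements merged into one kernel-verified Lean document; each statement's English description precedes it below -/
import Mathlib

section
/- Let $M$ be a metric space and $f_0, f_1 : N \to M$ topological embeddings of a compact space $N$. Let $\{U_i\}_{i\ge 1}$ be a decreasing sequence of open sets with $\bigcap_{i\ge 1} U_i = f_0(N)$, and let $\{\psi_i\}_{i\ge 1}$ be a sequence of homeomorphisms of $M$ such that: (1) $\psi_i$ is supported inside $\varphi_{i-1}(U_i)$, where $\varphi_i = \psi_i \circ \cdots \circ \psi_1$, and $f_1(N) \subset \varphi_{i-1}(U_i)$; (2) $\sum_{i=1}^{\infty} d_{C^0}(\psi_i, \mathrm{Id}) < \infty$; (3) the sequence $\varphi_i \circ f_0$ converges uniformly to $f_1$. Then the sequence $\varphi_i$ converges uniformly to a continuous injective map $\varphi : M \to M$ satisfying $\varphi \circ f_0 = f_1$. -/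
/-!
Every orbit `i ↦ φ i x` converges: on `f₀(N)` by hypothesis, and off `f₀(N)` because once
`x ∉ U (k+1)` the point `φ k x` lies outside the supports of all later `ψ j`, so the orbit is
eventually constant. The summable bound on the steps upgrades this to uniform convergence, so
the limit `φ'` is continuous. For injectivity, the points of `f₀(N)` are mapped injectively
onto `f₁(N)`, while a point outside `f₀(N)` is sent to `φ k x` with `x ∉ U (k+1)`, hence
outside `φ k (U (k+1)) ⊇ f₁(N)`, and two such points are separated by the injective `φ k`.
-/

open Filter Set Topology

theorem tendstoUniformly_of_dist_succ_le_of_summable {α X : Type*} [PseudoMetricSpace X]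
    {F : ℕ → α → X} {f : α → X} {d : ℕ → ℝ} (hd : ∀ n x, dist (F n x) (F (n + 1) x) ≤ d n)
    (hsum : Summable d) (hlim : ∀ x, Tendsto (fun n => F n x) atTop (𝓝 (f x))) :
    TendstoUniformly F f atTop := by
  rw [Metric.tendstoUniformly_iff]
  intro ε hε
  have htail : ∀ᶠ n in atTop, ∑' k, d (k + n) < ε :=
    (tendsto_sum_nat_add d).eventually (gt_mem_nhds hε)
  filter_upwards [htail] with n hn x
  calc dist (f x) (F n x) = dist (F n x) (f x) := dist_comm _ _
    _ ≤ ∑' m, d (n + m) := dist_le_tsum_of_dist_le_of_tendsto d (hd · x) hsum (hlim x) n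
    _ < ε := by simpa only [add_comm] using hn

theorem exists_homeomorph_coe_eq {X : Type*} [TopologicalSpace X] {ψ : ℕ → X ≃ₜ X}
    {φ : ℕ → X → X} (hφ0 : φ 0 = id) (hφs : ∀ i, φ (i + 1) = ψ (i + 1) ∘ φ i) (i : ℕ) :
    ∃ h : X ≃ₜ X, ⇑h = φ i := by
  induction i with
  | zero => exact ⟨Homeomorph.refl X, hφ0.symm⟩
  | succ i ih =>
    obtain ⟨h, hh⟩ := ih
    exact ⟨h.trans (ψ (i + 1)), by rw [hφs, ← hh]; rfl⟩

theorem eventually_apply_eq_of_notMem {X : Type*} {U : ℕ → Set X} {ψ φ : ℕ → X → X}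
    (hU : Antitone U) (hinj : ∀ i, Function.Injective (φ i))
    (hφs : ∀ i, φ (i + 1) = ψ (i + 1) ∘ φ i)
    (hsupp : ∀ i, ∀ x, x ∉ φ i '' U (i + 1) → ψ (i + 1) x = x)
    {k : ℕ} {x : X} (hx : x ∉ U (k + 1)) :
    ∀ᶠ j in atTop, φ j x = φ k x ∧ x ∉ U (j + 1) := by
  have hstep : ∀ j, x ∉ U (j + 1) → φ (j + 1) x = φ j x := fun j hj => by
    rw [hφs, Function.comp_apply]
    exact hsupp j _ fun ⟨u, hu, hux⟩ => hj (hinj j hux ▸ hu)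
  have hxj : ∀ j ≥ k, x ∉ U (j + 1) := fun j hkj h => hx (hU (by omega) h)
  filter_upwards [eventually_ge_atTop k] with j hj
  refine ⟨?_, hxj j hj⟩
  induction j, hj using Nat.le_induction with
  | base => rfl
  | succ j hkj ih => rw [hstep j (hxj j hkj), ih]

theorem injective_of_eventually_eq_apply {X : Type*} {g : X → X} {φ : ℕ → X → X}
    {V : ℕ → Set X} {A : Set X} (hinj : ∀ k, Function.Injective (φ k)) (hA : InjOn g A)
    (hAV : ∀ k, g '' A ⊆ φ k '' V k)
    (hout : ∀ x ∉ A, ∀ᶠ k in atTop, g x = φ k x ∧ x ∉ V k) :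
    Function.Injective g := by
  have hnot : ∀ a ∈ A, ∀ y ∉ A, g a ≠ g y := by
    intro a ha y hy hay
    obtain ⟨k, hgy, hyV⟩ := (hout y hy).exists
    obtain ⟨v, hv, hvy⟩ := hAV k ⟨a, ha, hay.trans hgy⟩
    exact hyV (hinj k hvy ▸ hv)
  intro x y hxy
  by_cases hx : x ∈ A <;> by_cases hy : y ∈ A
  · exact hA hx hy hxy
  · exact absurd hxy (hnot x hx y hy)
  · exact absurd hxy.symm (hnot y hy x hx)
  · obtain ⟨k, ⟨hgx, -⟩, hgy, -⟩ := ((hout x hx).and (hout y hy)).exists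
    exact hinj k (hgx.symm.trans (hxy.trans hgy))

theorem stmt0_general {N M : Type*} [MetricSpace M]
    (f0 f1 : N → M)
    (hf1i : Function.Injective f1)
    (U : ℕ → Set M) (hUdec : ∀ i, U (i + 1) ⊆ U i)
    (hUcap : (⋂ i, U (i + 1)) = Set.range f0)
    (ψ : ℕ → M ≃ₜ M)
    (φ : ℕ → M → M) (hφ0 : φ 0 = id) (hφs : ∀ i, φ (i + 1) = ψ (i + 1) ∘ φ i)
    (hsupp : ∀ i, ∀ x, x ∉ φ i '' U (i + 1) → ψ (i + 1) x = x)
    (hrange : ∀ i, Set.range f1 ⊆ φ i '' U (i + 1))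
    (C : ℕ → ℝ) (hC : ∀ i x, dist (ψ i x) x ≤ C i) (hCsum : Summable C)
    (hconv : TendstoUniformly (fun i => φ i ∘ f0) f1 Filter.atTop) :
    ∃ φ' : M → M, Continuous φ' ∧ Function.Injective φ' ∧
      TendstoUniformly φ φ' Filter.atTop ∧ φ' ∘ f0 = f1 := by
  choose h hh using exists_homeomorph_coe_eq hφ0 hφs
  have hinj : ∀ i, Function.Injective (φ i) := fun i => hh i ▸ (h i).injective
  have hU : Antitone U := antitone_nat_of_succ_le hUdec
  have hstab : ∀ {k x}, x ∉ U (k + 1) → ∀ᶠ j in atTop, φ j x = φ k x ∧ x ∉ U (j + 1) :=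
    eventually_apply_eq_of_notMem (ψ := fun i => ψ i) hU hinj hφs hsupp
  have hconst : ∀ {k x}, x ∉ U (k + 1) → Tendsto (fun j => φ j x) atTop (𝓝 (φ k x)) :=
    fun hk => tendsto_const_nhds.congr' ((hstab hk).mono fun _ hj => hj.1.symm)
  have hoff : ∀ x ∉ range f0, ∃ k, x ∉ U (k + 1) := fun x hx => by
    simpa only [← hUcap, mem_iInter, not_forall] using hx
  have hlim : ∀ x, ∃ L, Tendsto (fun i => φ i x) atTop (𝓝 L) := fun x => by
    by_cases hx : x ∈ range f0
    · obtain ⟨n, rfl⟩ := hx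
      exact ⟨f1 n, hconv.tendsto_at n⟩
    · obtain ⟨k, hk⟩ := hoff x hx
      exact ⟨φ k x, hconst hk⟩
  choose φ' hφ' using hlim
  have hcomp : φ' ∘ f0 = f1 := funext fun n => tendsto_nhds_unique (hφ' (f0 n)) (hconv.tendsto_at n)
  have htu : TendstoUniformly φ φ' atTop :=
    tendstoUniformly_of_dist_succ_le_of_summable (d := fun n => C (n + 1))
      (fun n x => by rw [hφs, dist_comm]; exact hC _ _) ((summable_nat_add_iff 1).mpr hCsum) hφ'
  have hout : ∀ x ∉ range f0, ∀ᶠ k in atTop, φ' x = φ k x ∧ x ∉ U (k + 1) := by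
    intro x hx
    obtain ⟨k, hk⟩ := hoff x hx
    have hφ'x : φ' x = φ k x := tendsto_nhds_unique (hφ' x) (hconst hk)
    exact (hstab hk).mono fun j hj => ⟨hφ'x.trans hj.1.symm, hj.2⟩
  refine ⟨φ', htu.continuous (Frequently.of_forall fun i => hh i ▸ (h i).continuous),
    injective_of_eventually_eq_apply hinj (hcomp ▸ hf1i).injOn_range ?_ hout, htu, hcomp⟩
  exact fun k => by rw [← range_comp, hcomp]; exact hrange k

/-- uniform limit of compositions of homeomorphisms with summable
`C⁰`-distances, supported in shrinking neighbourhoods of `f₀(N)`, gives a continuous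
injective map `φ` with `φ ∘ f₀ = f₁`. -/
theorem stmt0 {N M : Type*} [TopologicalSpace N] [CompactSpace N] [MetricSpace M]
    (f0 f1 : N → M) (hf0c : Continuous f0) (hf0i : Function.Injective f0)
    (hf1c : Continuous f1) (hf1i : Function.Injective f1)
    (U : ℕ → Set M) (hUopen : ∀ i, IsOpen (U i)) (hUdec : ∀ i, U (i + 1) ⊆ U i)
    (hUcap : (⋂ i, U (i + 1)) = Set.range f0)
    (ψ : ℕ → M ≃ₜ M)
    (φ : ℕ → M → M) (hφ0 : φ 0 = id) (hφs : ∀ i, φ (i + 1) = ψ (i + 1) ∘ φ i)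
    (hsupp : ∀ i, ∀ x, x ∉ φ i '' U (i + 1) → ψ (i + 1) x = x)
    (hrange : ∀ i, Set.range f1 ⊆ φ i '' U (i + 1))
    (C : ℕ → ℝ) (hC : ∀ i x, dist (ψ i x) x ≤ C i) (hCsum : Summable C)
    (hconv : TendstoUniformly (fun i => φ i ∘ f0) f1 Filter.atTop) :
    ∃ φ' : M → M, Continuous φ' ∧ Function.Injective φ' ∧
      TendstoUniformly φ φ' Filter.atTop ∧ φ' ∘ f0 = f1 :=
  stmt0_general f0 f1 hf1i U hUdec hUcap ψ φ hφ0 hφs hsupp hrange C hC hCsum hconv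
end

section
/- Let $\gamma_0, \gamma_1 : [0,1] \to \mathbb{R}^{2n+1}$ be curves in coordinates $(z, \varphi, \rho, x_2, y_2, \ldots, x_n, y_n)$, with $\gamma_i(t) = (z_i(t), \varphi_i(t), \rho_i(t), 0, \ldots, 0)$, such that $z_0'(\tau), z_1'(\tau) > 0$, $\rho_0, \rho_1 > 0$, and $\tfrac{1}{2} \le \rho_0(\tau)/\rho_1(\tau) \le 2$ for $\tau$ in an interval $I \subset [0,1]$ containing $t_0$. For $s \in [0,1]$ define $\varphi_s(t) = \varphi_0(t_0) + \int_{t_0}^t \frac{(1-s) z_0'(\tau) + s z_1'(\tau)}{(1-s)\rho_0(\tau) + s\rho_1(\tau)}\, d\tau$. Then for all $t \in I$ and $s \in [0,1]$: $|\varphi_s(t) - \varphi_0(t_0)| \le 2 |I| \cdot \max_{\tau \in I} \max\{|\varphi_0'(\tau)|, |\varphi_1'(\tau)|\}$, where $\varphi_i'(\tau) = z_i'(\tau)/\rho_i(\tau)$ and $|I|$ is the length of $I$. -/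
/-- the key estimate on the `φ`-coordinate of the isotropic interpolation:
`|∫_{t₀}^{t} ((1-s)z₀' + s z₁')/((1-s)ρ₀ + s ρ₁)| ≤ 2|I| · max(|φ₀'|, |φ₁'|)`. -/
theorem stmt10 (a b : ℝ) (hab : a ≤ b) (hI : Set.Icc a b ⊆ Set.Icc (0 : ℝ) 1)
    (Z0 Z1 R0 R1 : ℝ → ℝ)
    (hZ0 : ContinuousOn Z0 (Set.Icc a b)) (hZ1 : ContinuousOn Z1 (Set.Icc a b))
    (hR0 : ContinuousOn R0 (Set.Icc a b)) (hR1 : ContinuousOn R1 (Set.Icc a b))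
    (hpos : ∀ τ ∈ Set.Icc a b, 0 < Z0 τ ∧ 0 < Z1 τ ∧ 0 < R0 τ ∧ 0 < R1 τ)
    (hratio : ∀ τ ∈ Set.Icc a b, 1 / 2 ≤ R0 τ / R1 τ ∧ R0 τ / R1 τ ≤ 2)
    (C : ℝ) (hC : ∀ τ ∈ Set.Icc a b, Z0 τ / R0 τ ≤ C ∧ Z1 τ / R1 τ ≤ C)
    (s : ℝ) (hs : s ∈ Set.Icc (0 : ℝ) 1)
    (t0 t : ℝ) (ht0 : t0 ∈ Set.Icc a b) (ht : t ∈ Set.Icc a b) :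
    |∫ τ in t0..t, ((1 - s) * Z0 τ + s * Z1 τ) / ((1 - s) * R0 τ + s * R1 τ)|
      ≤ 2 * (b - a) * C := by
  obtain ⟨hs0, hs1⟩ := hs
  have hCpos : 0 < C := by
    obtain ⟨hz0, _, hr0, _⟩ := hpos t0 ht0
    exact lt_of_lt_of_le (div_pos hz0 hr0) (hC t0 ht0).1
  have key : ∀ τ ∈ Set.uIoc t0 t,
      ‖((1 - s) * Z0 τ + s * Z1 τ) / ((1 - s) * R0 τ + s * R1 τ)‖ ≤ C := by
    intro τ hτ
    have hτ' : τ ∈ Set.Icc a b := by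
      rcases Set.mem_uIoc.mp hτ with h | h
      · exact ⟨by linarith [ht0.1, h.1.le], by linarith [ht.2, h.2]⟩
      · exact ⟨by linarith [ht.1, h.1.le], by linarith [ht0.2, h.2]⟩
    obtain ⟨hz0, hz1, hr0, hr1⟩ := hpos τ hτ'
    obtain ⟨hc0, hc1⟩ := hC τ hτ'
    have hD : 0 < (1 - s) * R0 τ + s * R1 τ := by
      rcases lt_or_eq_of_le hs1 with h | h
      · nlinarith [mul_pos (by linarith : (0:ℝ) < 1 - s) hr0, mul_nonneg hs0 hr1.le]
      · subst h; simpa using hr1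
    have hN0 : 0 ≤ (1 - s) * Z0 τ + s * Z1 τ := by nlinarith
    have h0 : Z0 τ ≤ C * R0 τ := by rw [div_le_iff₀ hr0] at hc0; linarith
    have h1 : Z1 τ ≤ C * R1 τ := by rw [div_le_iff₀ hr1] at hc1; linarith
    rw [Real.norm_eq_abs, abs_of_nonneg (div_nonneg hN0 hD.le), div_le_iff₀ hD]
    nlinarith
  calc |∫ τ in t0..t, ((1 - s) * Z0 τ + s * Z1 τ) / ((1 - s) * R0 τ + s * R1 τ)|
      ≤ C * |t - t0| := intervalIntegral.norm_integral_le_of_norm_le_const key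
    _ ≤ 2 * (b - a) * C := by
        have h1 : |t - t0| ≤ b - a := by
          rw [abs_sub_le_iff]
          exact ⟨by linarith [ht.2, ht0.1], by linarith [ht0.2, ht.1]⟩
        nlinarith [abs_nonneg (t - t0)]
end

section
/- Let $(Y, d)$ be a metric space, $\Lambda \subset Y$ a compact subset, $\mathcal{U} \supset \Lambda$ open, and $\varphi_i : Y \to Y$ a sequence of homeomorphisms converging uniformly to a continuous map $\varphi : Y \to Y$ satisfying $\varphi(Y \setminus \Lambda) \cap \varphi(\Lambda) = \emptyset$. Assume additionally $Y \setminus \mathcal{U}$ is compact. Then there exists $m \in \mathbb{N}$ such that $\varphi(\Lambda) \subset \varphi_i(\mathcal{U})$ for all $i \ge m$. -/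
/-!
A point `y = φ x` with `x ∈ Λ` has a preimage `z` under `φᵢ`. If `z ∉ U`, then `φ z` lies in the
compact set `φ(Uᶜ)`, which is disjoint from the compact set `φ(Λ)` and hence at positive distance
from it; but for large `i` the point `φ z` is arbitrarily close to `φᵢ z = y ∈ φ(Λ)`.
-/

open Filter Set

theorem TendstoUniformly.eventually_image_subset_image {ι α β : Type*} [UniformSpace β]
    {F : ι → α → β} {f : α → β} {p : Filter ι} (hF : TendstoUniformly F f p)
    (hsurj : ∀ i, Function.Surjective (F i)) {s u : Set α} (hs : IsCompact (f '' s))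
    (hu : IsClosed (f '' uᶜ)) (hsu : Disjoint (f '' s) (f '' uᶜ)) :
    ∀ᶠ i in p, f '' s ⊆ F i '' u := by
  obtain ⟨V, hV, hthick⟩ := hsu.exists_uniform_thickening hs hu
  filter_upwards [hF V hV] with i hi
  rintro _ ⟨x, hx, rfl⟩
  obtain ⟨z, hz⟩ := hsurj i (f x)
  refine ⟨z, by_contra fun hzu => ?_, hz⟩
  have near_s : f x ∈ ⋃ y ∈ f '' s, UniformSpace.ball y V :=
    mem_iUnion₂.2 ⟨f x, mem_image_of_mem f hx, refl_mem_uniformity hV⟩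
  have near_u : f x ∈ ⋃ y ∈ f '' uᶜ, UniformSpace.ball y V :=
    mem_iUnion₂.2 ⟨f z, mem_image_of_mem f hzu, hz ▸ hi z⟩
  exact hthick.ne_of_mem near_s near_u rfl

theorem stmt18_general {Y : Type*} [MetricSpace Y] (Λ : Set Y) (hΛ : IsCompact Λ)
    (U : Set Y) (hΛU : Λ ⊆ U) (hUc : IsCompact Uᶜ)
    (φi : ℕ → Y ≃ₜ Y) (φ : Y → Y)
    (hconv : TendstoUniformly (fun i => ⇑(φi i)) φ Filter.atTop)
    (hdisj : φ '' Λᶜ ∩ φ '' Λ = ∅) :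
    ∃ m : ℕ, ∀ i ≥ m, φ '' Λ ⊆ (φi i) '' U := by
  have hφ : Continuous φ :=
    hconv.continuous (Eventually.of_forall fun i => (φi i).continuous).frequently
  have hsep : Disjoint (φ '' Λ) (φ '' Uᶜ) :=
    (disjoint_iff_inter_eq_empty.2 hdisj).symm.mono_right
      (image_mono (compl_subset_compl.2 hΛU))
  exact eventually_atTop.1 <| hconv.eventually_image_subset_image (fun i => (φi i).surjective)
    (hΛ.image hφ) (hUc.image hφ).isClosed hsep

/-- if homeomorphisms `φᵢ` converge uniformly to `φ` with
`φ(Y∖Λ) ∩ φ(Λ) = ∅`, `Λ` compact, `U ⊇ Λ` open with compact complement, then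
`φ(Λ) ⊆ φᵢ(U)` for all large `i`. -/
theorem stmt18 {Y : Type*} [MetricSpace Y] (Λ : Set Y) (hΛ : IsCompact Λ)
    (U : Set Y) (hU : IsOpen U) (hΛU : Λ ⊆ U) (hUc : IsCompact Uᶜ)
    (φi : ℕ → Y ≃ₜ Y) (φ : Y → Y)
    (hconv : TendstoUniformly (fun i => ⇑(φi i)) φ Filter.atTop)
    (hdisj : φ '' Λᶜ ∩ φ '' Λ = ∅) :
    ∃ m : ℕ, ∀ i ≥ m, φ '' Λ ⊆ (φi i) '' U :=
  stmt18_general Λ hΛ U hΛU hUc φi φ hconv hdisj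
end
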